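/- arXiv:2201.02018 — 11 statements merged into one kernel-verified Lean document; each statement's English description precedes it below -/
import Mathlib

section
/- If f is feasible for the problem min{B(f) : f is a super-reparametrization of g}, then f is optimal if and only if the CSP A*(f) of active tuples has a solution x satisfying ⟨f,φ(x)⟩ = ⟨g,φ(x)⟩. -/
open Finset

variable {V : Type*} {D : Type*}

/-- A tuple `(S, k)` where `S ∈ C` is a scope and `k : D^S`. -/
abbrev Tup (C : Finset (Finset V)) (D : Type*) : Type _ :=
  (S : {S : Finset V // S ∈ C}) × ({v : V // v ∈ S.1} → D)

variable [Fintype V] [DecidableEq V] [Fintype D] [DecidableEq D] [Nonempty D]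

/-- WCSP objective `⟨f, φ(x)⟩ = Σ_{S∈C} f_S(x[S])`. -/
def val (C : Finset (Finset V)) (f : Tup C D → ℝ) (x : V → D) : ℝ :=
  ∑ S : {S : Finset V // S ∈ C}, f ⟨S, fun i => x i.1⟩

/-- Upper bound `B(f) = Σ_{S∈C} max_{k∈D^S} f_S(k)`. -/
noncomputable def B (C : Finset (Finset V)) (f : Tup C D → ℝ) : ℝ :=
  ∑ S : {S : Finset V // S ∈ C},
    Finset.univ.sup' Finset.univ_nonempty (fun k : {v : V // v ∈ S.1} → D => f ⟨S, k⟩)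

/-- The active-tuple CSP: tuples whose weight is maximal within their scope. -/
def Astar (C : Finset (Finset V)) (f : Tup C D → ℝ) : Set (Tup C D) :=
  {t | ∀ k : {v : V // v ∈ t.1.1} → D, f ⟨t.1, k⟩ ≤ f t}

/-- Solution set of a CSP `A ⊆ T`. -/
def SOL (C : Finset (Finset V)) (A : Set (Tup C D)) : Set (V → D) :=
  {x | ∀ S : {S : Finset V // S ∈ C}, (⟨S, fun i => x i.1⟩ : Tup C D) ∈ A}

/-- `f` is a super-reparametrization of `g`. -/
def SuperRepar (C : Finset (Finset V)) (g f : Tup C D → ℝ) : Prop :=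
  ∀ x : V → D, val C g x ≤ val C f x

/-- Set of optimal assignments of WCSP `g`. -/
def OPT (C : Finset (Finset V)) (g : Tup C D → ℝ) : Set (V → D) :=
  {x | ∀ y : V → D, val C g y ≤ val C g x}

/-- `d` is an `R`-deactivating direction for CSP `A`. -/
def Deact (C : Finset (Finset V)) (A R : Set (Tup C D)) (d : Tup C D → ℝ) : Prop :=
  (∀ x : V → D, 0 ≤ val C d x) ∧ (∀ t ∈ R, d t < 0) ∧ (∀ t ∈ A \ R, d t = 0)

/-- Minimal CSP for a set of assignments `X`. -/
def Amin (C : Finset (Finset V)) (X : Set (V → D)) : Set (Tup C D) :=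
  ⋂₀ {A : Set (Tup C D) | X ⊆ SOL C A}

theorem stmt2 (C : Finset (Finset V)) (g f : Tup C D → ℝ) (hf : SuperRepar C g f) :
    (∀ f' : Tup C D → ℝ, SuperRepar C g f' → B C f ≤ B C f') ↔
      ∃ x ∈ SOL C (Astar C f), val C f x = val C g x := by
  classical
  constructor
  · intro hopt
    by_contra hno
    push_neg at hno
    have hCne : Nonempty {S : Finset V // S ∈ C} := by
      by_contra hC
      rw [not_nonempty_iff] at hC
      have x0 : V → D := fun _ => Classical.arbitrary D
      refine hno x0 (fun S => (hC.false S).elim) ?_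
      simp only [_root_.val, Finset.univ_eq_empty, Finset.sum_empty]
    set n : ℕ := Fintype.card {S : Finset V // S ∈ C} with hn_def
    have hn : 1 ≤ n := Fintype.card_pos
    have hnR : (0 : ℝ) < n := by exact_mod_cast hn
    set mS : {S : Finset V // S ∈ C} → ℝ :=
      fun S => Finset.univ.sup' Finset.univ_nonempty
        (fun k : {v : V // v ∈ S.1} → D => f ⟨S, k⟩) with hmS_def
    have hle_mS : ∀ t : Tup C D, f t ≤ mS t.1 := by
      rintro ⟨S, k⟩
      simp only [hmS_def]
      exact Finset.le_sup' (fun k : {v : V // v ∈ S.1} → D => f ⟨S, k⟩)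
        (Finset.mem_univ k)
    set E : Finset ℝ :=
      insert 1
        (((Finset.univ.filter (fun x : V → D => x ∈ SOL C (Astar C f))).image
            (fun x => (val C f x - val C g x) / n))
          ∪ ((Finset.univ.filter (fun t : Tup C D => t ∉ Astar C f)).image
            (fun t => (mS t.1 - f t) / (n + 1)))) with hE_def
    have hEne : E.Nonempty := ⟨1, Finset.mem_insert_self _ _⟩
    set ε : ℝ := E.min' hEne with hε_def
    have hgap : ∀ t : Tup C D, t ∉ Astar C f → 0 < mS t.1 - f t := by
      intro t ht
      rw [Astar, Set.mem_setOf_eq] at ht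
      push_neg at ht
      obtain ⟨k, hk⟩ := ht
      have h1 : f ⟨t.1, k⟩ ≤ mS t.1 := hle_mS ⟨t.1, k⟩
      have ht2 : f ⟨t.1, t.2⟩ < f ⟨t.1, k⟩ := hk
      linarith
    have hεpos : 0 < ε := by
      have hmem := E.min'_mem hEne
      rw [← hε_def] at hmem
      rw [hE_def] at hmem
      rcases Finset.mem_insert.mp hmem with h | h
      · rw [h]; norm_num
      · rcases Finset.mem_union.mp h with h | h
        · obtain ⟨x, hx, hxe⟩ := Finset.mem_image.mp h
          have hxSOL : x ∈ SOL C (Astar C f) := (Finset.mem_filter.mp hx).2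
          have h1 : val C g x ≤ val C f x := hf x
          have h2 : val C f x ≠ val C g x := hno x hxSOL
          rw [← hxe]
          have : 0 < val C f x - val C g x := by
            rcases lt_or_eq_of_le h1 with h | h
            · linarith
            · exact absurd h.symm h2
          positivity
        · obtain ⟨t, ht, hte⟩ := Finset.mem_image.mp h
          have htA : t ∉ Astar C f := by
            have := (Finset.mem_filter.mp ht).2
            simpa using this
          have := hgap t htA
          rw [← hte]
          positivity
    have hε1 : ∀ x ∈ SOL C (Astar C f), (n : ℝ) * ε ≤ val C f x - val C g x := by
      intro x hx
      have hmem : (val C f x - val C g x) / n ∈ E := by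
        rw [hE_def]
        refine Finset.mem_insert_of_mem (Finset.mem_union_left _ ?_)
        exact Finset.mem_image.mpr ⟨x, Finset.mem_filter.mpr ⟨Finset.mem_univ _, hx⟩, rfl⟩
      have := E.min'_le _ hmem
      rw [← hε_def] at this
      rw [le_div_iff₀ hnR] at this
      linarith
    have hε2 : ∀ t : Tup C D, t ∉ Astar C f → ((n : ℝ) + 1) * ε ≤ mS t.1 - f t := by
      intro t ht
      have hmem : (mS t.1 - f t) / (n + 1) ∈ E := by
        rw [hE_def]
        refine Finset.mem_insert_of_mem (Finset.mem_union_right _ ?_)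
        refine Finset.mem_image.mpr ⟨t, Finset.mem_filter.mpr ⟨Finset.mem_univ _, ?_⟩, rfl⟩
        simpa using ht
      have := E.min'_le _ hmem
      rw [← hε_def] at this
      rw [le_div_iff₀ (by positivity : (0:ℝ) < (n:ℝ) + 1)] at this
      linarith
    set f' : Tup C D → ℝ :=
      fun t => if t ∈ Astar C f then f t - ε else f t + n * ε with hf'_def
    have hval' : ∀ x : V → D, val C f' x = val C f x +
        ∑ S : {S : Finset V // S ∈ C},
          (if (⟨S, fun i => x i.1⟩ : Tup C D) ∈ Astar C f then -ε else n * ε) := by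
      intro x
      simp only [_root_.val]
      rw [← Finset.sum_add_distrib]
      refine Finset.sum_congr rfl fun S _ => ?_
      simp only [hf'_def]
      by_cases h : (⟨S, fun i => x i.1⟩ : Tup C D) ∈ Astar C f
      · rw [if_pos h, if_pos h]; ring
      · rw [if_neg h, if_neg h]
    have hsr : SuperRepar C g f' := by
      intro x
      rw [hval' x]
      by_cases hx : x ∈ SOL C (Astar C f)
      · have hsum : ∑ S : {S : Finset V // S ∈ C},
            (if (⟨S, fun i => x i.1⟩ : Tup C D) ∈ Astar C f then -ε else n * ε)
            = -((n : ℝ) * ε) := by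
          rw [Finset.sum_congr rfl (fun S _ => if_pos (hx S))]
          rw [Finset.sum_const, Finset.card_univ, ← hn_def]
          push_cast
          ring
        rw [hsum]
        have := hε1 x hx
        linarith
      · rw [SOL, Set.mem_setOf_eq] at hx
        push_neg at hx
        obtain ⟨S0, hS0⟩ := hx
        have hterm : ∀ S : {S : Finset V // S ∈ C},
            (0 : ℝ) ≤ (if (⟨S, fun i => x i.1⟩ : Tup C D) ∈ Astar C f
              then -ε else n * ε) + ε := by
          intro S
          by_cases h : (⟨S, fun i => x i.1⟩ : Tup C D) ∈ Astar C f
          · rw [if_pos h]; ring_nf; positivity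
          · rw [if_neg h]; positivity
        have hsingle : ((if (⟨S0, fun i => x i.1⟩ : Tup C D) ∈ Astar C f
              then -ε else (n : ℝ) * ε) + ε) ≤
            ∑ S : {S : Finset V // S ∈ C},
              ((if (⟨S, fun i => x i.1⟩ : Tup C D) ∈ Astar C f then -ε else n * ε) + ε) :=
          Finset.single_le_sum (fun S _ => hterm S) (Finset.mem_univ S0)
        rw [if_neg hS0] at hsingle
        rw [Finset.sum_add_distrib, Finset.sum_const, Finset.card_univ, ← hn_def]
          at hsingle
        have hfx := hf x
        have : (0 : ℝ) ≤ ∑ S : {S : Finset V // S ∈ C},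
            (if (⟨S, fun i => x i.1⟩ : Tup C D) ∈ Astar C f then -ε else n * ε) := by
          have h2 : (n : ℝ) * ε + ε ≤
              (∑ S : {S : Finset V // S ∈ C},
                (if (⟨S, fun i => x i.1⟩ : Tup C D) ∈ Astar C f then -ε else n * ε))
              + n • ε := hsingle
          rw [nsmul_eq_mul] at h2
          nlinarith [hεpos]
        linarith
    have hBlt : B C f' < B C f := by
      have hsup : ∀ S : {S : Finset V // S ∈ C},
          Finset.univ.sup' Finset.univ_nonempty
            (fun k : {v : V // v ∈ S.1} → D => f' ⟨S, k⟩) = mS S - ε := by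
        intro S
        apply le_antisymm
        · apply Finset.sup'_le
          intro k _
          simp only [hf'_def]
          by_cases h : (⟨S, k⟩ : Tup C D) ∈ Astar C f
          · rw [if_pos h]
            have : f ⟨S, k⟩ ≤ mS S := hle_mS ⟨S, k⟩
            linarith
          · rw [if_neg h]
            have := hε2 ⟨S, k⟩ h
            have hnn : (n : ℝ) * ε ≤ ((n : ℝ) + 1) * ε := by nlinarith [hεpos]
            linarith
        · obtain ⟨k0, _, hk0⟩ := Finset.exists_mem_eq_sup' (Finset.univ_nonempty)
            (fun k : {v : V // v ∈ S.1} → D => f ⟨S, k⟩)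
          have hk0A : (⟨S, k0⟩ : Tup C D) ∈ Astar C f := by
            intro k
            show f ⟨S, k⟩ ≤ f ⟨S, k0⟩
            rw [← hk0]
            exact Finset.le_sup' (fun k : {v : V // v ∈ S.1} → D => f ⟨S, k⟩)
              (Finset.mem_univ k)
          have heq : f' ⟨S, k0⟩ = mS S - ε := by
            simp only [hf'_def, if_pos hk0A, hmS_def]
            rw [hk0]
          calc mS S - ε = f' ⟨S, k0⟩ := heq.symm
            _ ≤ _ := Finset.le_sup' (fun k : {v : V // v ∈ S.1} → D => f' ⟨S, k⟩)
              (Finset.mem_univ k0)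
      have hBf'eq : B C f' = (∑ S : {S : Finset V // S ∈ C}, mS S) - n * ε := by
        rw [B]
        rw [Finset.sum_congr rfl (fun S _ => hsup S)]
        rw [Finset.sum_sub_distrib, Finset.sum_const, Finset.card_univ, ← hn_def,
          nsmul_eq_mul]
      have hBfeq : B C f = ∑ S : {S : Finset V // S ∈ C}, mS S := rfl
      have hpos : (0 : ℝ) < n * ε := by positivity
      rw [hBf'eq, hBfeq]
      linarith
    exact absurd (hopt f' hsr) (not_le.mpr hBlt)
  · rintro ⟨x, hx, hval⟩ f' hf'
    have hBf : B C f = val C f x := by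
      rw [B]
      show _ = ∑ S : {S : Finset V // S ∈ C}, f ⟨S, fun i => x i.1⟩
      refine Finset.sum_congr rfl fun S _ => ?_
      apply le_antisymm
      · exact Finset.sup'_le _ _ fun k _ => hx S k
      · exact Finset.le_sup' (fun k : {v : V // v ∈ S.1} → D => f ⟨S, k⟩)
          (Finset.mem_univ _)
    have hBf' : val C f' x ≤ B C f' := by
      rw [B]
      show ∑ S : {S : Finset V // S ∈ C}, f' ⟨S, fun i => x i.1⟩ ≤ _
      exact Finset.sum_le_sum fun S _ =>
        Finset.le_sup' (fun k : {v : V // v ∈ S.1} → D => f' ⟨S, k⟩) (Finset.mem_univ _)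
    have := hf' x
    linarith [hBf, hBf', hval, this]
end

section
/- The minimal value of B(f) over all super-reparametrizations f of g equals the maximal value of the WCSP objective of g, i.e., min{B(f) : ∀x, ⟨f,φ(x)⟩ ≥ ⟨g,φ(x)⟩} = max_{x∈D^V} ⟨g,φ(x)⟩. -/
open Finset

variable {V : Type*} {D : Type*}

variable [Fintype V] [DecidableEq V] [Fintype D] [DecidableEq D] [Nonempty D]

theorem stmt3 (C : Finset (Finset V)) (g : Tup C D → ℝ) :
    IsLeast {b : ℝ | ∃ f : Tup C D → ℝ, SuperRepar C g f ∧ B C f = b}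
      (Finset.univ.sup' Finset.univ_nonempty (fun x : V → D => val C g x)) := by
  set M := Finset.univ.sup' Finset.univ_nonempty (fun x : V → D => val C g x) with hM
  constructor
  · -- membership
    set n := Fintype.card {S : Finset V // S ∈ C} with hn
    by_cases h0 : n = 0
    · have he : IsEmpty {S : Finset V // S ∈ C} := Fintype.card_eq_zero_iff.mp h0
      have hval : ∀ (f : Tup C D → ℝ) (x : V → D), val C f x = 0 := by
        intro f x
        simp [_root_.val, Finset.univ_eq_empty]
      have hM0 : M = 0 := by
        rw [hM]
        apply le_antisymm
        · exact Finset.sup'_le _ _ (fun x _ => le_of_eq (hval g x))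
        · exact le_trans (le_of_eq (hval g (Classical.arbitrary _)).symm)
            (Finset.le_sup' _ (Finset.mem_univ _))
      refine ⟨0, fun x => ?_, ?_⟩
      · rw [hval g x, hval 0 x]
      · rw [hM0]
        simp [B, Finset.univ_eq_empty]
    · refine ⟨fun _ => M / n, fun x => ?_, ?_⟩
      · have h1 : val C (fun _ => M / n) x = M := by
          simp only [_root_.val, Finset.sum_const, Finset.card_univ, ← hn, nsmul_eq_mul]
          field_simp
        rw [h1]
        exact Finset.le_sup' _ (Finset.mem_univ x)
      · simp only [B, Finset.sup'_const, Finset.sum_const, Finset.card_univ, ← hn,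
          nsmul_eq_mul]
        field_simp
  · rintro b ⟨f, hsr, rfl⟩
    apply Finset.sup'_le
    intro x _
    refine le_trans (hsr x) ?_
    apply Finset.sum_le_sum
    intro S _
    exact Finset.le_sup' (fun k => f ⟨S, k⟩) (Finset.mem_univ _)
end

section
/- For any weight vector g, the CSP A*(g) of active tuples is satisfiable if and only if B(g) ≤ B(f) for every super-reparametrization f of g. -/
open Finset

variable {V : Type*} {D : Type*}

variable [Fintype V] [DecidableEq V] [Fintype D] [DecidableEq D] [Nonempty D]

theorem stmt4 (C : Finset (Finset V)) (g : Tup C D → ℝ) :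
    (SOL C (Astar C g)).Nonempty ↔
      ∀ f : Tup C D → ℝ, SuperRepar C g f → B C g ≤ B C f := by
  classical
  constructor
  · rintro ⟨x, hx⟩ f hf
    have hBg : B C g = val C g x := by
      unfold B _root_.val
      refine Finset.sum_congr rfl fun S _ => ?_
      refine le_antisymm (Finset.sup'_le _ _ fun k _ => hx S k) ?_
      exact Finset.le_sup' (fun k : {v : V // v ∈ S.1} → D => g ⟨S, k⟩) (mem_univ _)
    have hval : val C f x ≤ B C f := by
      unfold B _root_.val
      exact Finset.sum_le_sum fun S _ =>
        Finset.le_sup' (fun k : {v : V // v ∈ S.1} → D => f ⟨S, k⟩) (mem_univ _)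
    calc B C g = val C g x := hBg
      _ ≤ val C f x := hf x
      _ ≤ B C f := hval
  · intro hall
    by_contra hempty
    rw [Set.not_nonempty_iff_eq_empty] at hempty
    have hinact : ∀ x : V → D, ∃ S : {S : Finset V // S ∈ C},
        (⟨S, fun i => x i.1⟩ : Tup C D) ∉ Astar C g := by
      intro x
      by_contra h
      push_neg at h
      have : x ∈ SOL C (Astar C g) := h
      rw [hempty] at this
      exact this
    obtain ⟨x0⟩ : Nonempty (V → D) := inferInstance
    obtain ⟨S1, hS1⟩ := hinact x0
    haveI hι : Nonempty {S : Finset V // S ∈ C} := ⟨S1⟩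
    set n : ℕ := Fintype.card {S : Finset V // S ∈ C} with hn
    have hn1 : 1 ≤ n := Fintype.card_pos
    set Mx : {S : Finset V // S ∈ C} → ℝ := fun S =>
      Finset.univ.sup' Finset.univ_nonempty (fun k : {v : V // v ∈ S.1} → D => g ⟨S, k⟩)
      with hMx
    have hMle : ∀ t : Tup C D, g t ≤ Mx t.1 := by
      intro t
      exact Finset.le_sup' (fun k : {v : V // v ∈ t.1.1} → D => g ⟨t.1, k⟩) (mem_univ t.2)
    set T : Finset (Tup C D) := Finset.univ.filter (fun t => t ∉ Astar C g) with hT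
    have hTne : T.Nonempty := ⟨⟨S1, fun i => x0 i.1⟩, by
      rw [hT, Finset.mem_filter]
      exact ⟨mem_univ _, hS1⟩⟩
    set γ : ℝ := T.inf' hTne (fun t => Mx t.1 - g t) with hγ
    have hγpos : 0 < γ := by
      rw [hγ, Finset.lt_inf'_iff]
      intro t ht
      have ht' : t ∉ Astar C g := (Finset.mem_filter.mp ht).2
      have : ∃ k : {v : V // v ∈ t.1.1} → D, g t < g ⟨t.1, k⟩ := by
        by_contra hk
        push_neg at hk
        exact ht' hk
      obtain ⟨k, hk⟩ := this
      have : g ⟨t.1, k⟩ ≤ Mx t.1 :=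
        Finset.le_sup' (fun k : {v : V // v ∈ t.1.1} → D => g ⟨t.1, k⟩) (mem_univ k)
      linarith
    set δ : ℝ := γ / (n + 1) with hδ
    have hδpos : 0 < δ := by
      apply div_pos hγpos
      positivity
    have hγδ : γ = (n + 1) * δ := by
      rw [hδ]
      field_simp
    set F : Tup C D → ℝ := fun t =>
      if t ∈ Astar C g then g t - δ else g t + (n : ℝ) * δ with hF
    have hFval : ∀ t : Tup C D, F t = if t ∈ Astar C g then g t - δ else g t + (n : ℝ) * δ :=
      fun t => rfl
    have hFge : ∀ t : Tup C D, g t - δ ≤ F t := by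
      intro t
      by_cases h : t ∈ Astar C g
      · rw [hFval, if_pos h]
      · rw [hFval, if_neg h]
        have : (0:ℝ) ≤ (n : ℝ) * δ := by positivity
        linarith
    have hFle : ∀ t : Tup C D, F t ≤ Mx t.1 - δ := by
      intro t
      by_cases h : t ∈ Astar C g
      · rw [hFval, if_pos h]
        linarith [hMle t]
      · rw [hFval, if_neg h]
        have htT : t ∈ T := by
          rw [hT, Finset.mem_filter]
          exact ⟨mem_univ _, h⟩
        have : γ ≤ Mx t.1 - g t := Finset.inf'_le _ htT
        rw [hγδ] at this
        linarith
    have hsr : SuperRepar C g F := by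
      intro x
      obtain ⟨S0, hS0⟩ := hinact x
      have hF0 : F ⟨S0, fun i => x i.1⟩ = g ⟨S0, fun i => x i.1⟩ + (n : ℝ) * δ := by
        rw [hFval, if_neg hS0]
      have hsplit1 : val C g x = g ⟨S0, fun i => x i.1⟩ +
          ∑ S ∈ Finset.univ.erase S0, g (⟨S, fun i => x i.1⟩ : Tup C D) := by
        rw [_root_.val, ← Finset.add_sum_erase _ _ (mem_univ S0)]
      have hsplit2 : val C F x = F ⟨S0, fun i => x i.1⟩ +
          ∑ S ∈ Finset.univ.erase S0, F (⟨S, fun i => x i.1⟩ : Tup C D) := by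
        rw [_root_.val, ← Finset.add_sum_erase _ _ (mem_univ S0)]
      have hsum : ∑ S ∈ Finset.univ.erase S0, g (⟨S, fun i => x i.1⟩ : Tup C D) ≤
          (∑ S ∈ Finset.univ.erase S0, F (⟨S, fun i => x i.1⟩ : Tup C D)) + ((n : ℝ) - 1) * δ := by
        have h1 : ∑ S ∈ Finset.univ.erase S0, g (⟨S, fun i => x i.1⟩ : Tup C D) ≤
            ∑ S ∈ Finset.univ.erase S0, (F (⟨S, fun i => x i.1⟩ : Tup C D) + δ) := by
          refine Finset.sum_le_sum fun S _ => ?_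
          linarith [hFge (⟨S, fun i => x i.1⟩ : Tup C D)]
        have h2 : ∑ S ∈ Finset.univ.erase S0, (F (⟨S, fun i => x i.1⟩ : Tup C D) + δ) =
            (∑ S ∈ Finset.univ.erase S0, F (⟨S, fun i => x i.1⟩ : Tup C D)) + ((n : ℝ) - 1) * δ := by
          rw [Finset.sum_add_distrib, Finset.sum_const,
            Finset.card_erase_of_mem (mem_univ _), Finset.card_univ, ← hn, nsmul_eq_mul,
            Nat.cast_sub hn1, Nat.cast_one]
        linarith
      rw [hsplit1, hsplit2]
      linarith
    have hBF : B C F < B C g := by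
      have h1 : B C F ≤ ∑ S : {S : Finset V // S ∈ C}, (Mx S - δ) := by
        refine Finset.sum_le_sum fun S _ => ?_
        refine Finset.sup'_le _ _ fun k _ => ?_
        exact hFle (⟨S, k⟩ : Tup C D)
      have h2 : ∑ S : {S : Finset V // S ∈ C}, (Mx S - δ) = B C g - (n : ℝ) * δ := by
        rw [Finset.sum_sub_distrib, Finset.sum_const, Finset.card_univ, ← hn, nsmul_eq_mul]
        rfl
      have hnδ : 0 < (n : ℝ) * δ := by
        have : (0:ℝ) < (n:ℝ) := by exact_mod_cast hn1
        positivity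
      linarith
    exact absurd (hall F hsr) (not_le.mpr hBF)
end

section
/- Let A ⊆ T be a CSP and R ⊆ A nonempty with SOL(A) = SOL(A−R). Let δ be the number of scopes S ∈ C such that T_S ∩ R ≠ ∅. Then the vector d with d_t = −1 for t ∈ R, d_t = δ for t ∈ T−A, and d_t = 0 for t ∈ A−R satisfies ⟨d,φ(x)⟩ ≥ 0 for all x ∈ D^V (i.e., d is an R-deactivating direction for A). -/
open Finset

variable {V : Type*} {D : Type*}

variable [Fintype V] [DecidableEq V] [Fintype D] [DecidableEq D] [Nonempty D]

theorem stmt5 (C : Finset (Finset V)) (A R : Set (Tup C D)) (hRA : R ⊆ A)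
    (hR : R.Nonempty) (hsol : SOL C A = SOL C (A \ R)) (d : Tup C D → ℝ)
    (hd1 : ∀ t ∈ R, d t = -1)
    (hd2 : ∀ t ∉ A, d t =
      ({S : {S : Finset V // S ∈ C} | ∃ k : {v : V // v ∈ S.1} → D,
          (⟨S, k⟩ : Tup C D) ∈ R}.ncard : ℝ))
    (hd3 : ∀ t ∈ A \ R, d t = 0) :
    Deact C A R d := by
  classical
  refine ⟨?_, fun t ht => by rw [hd1 t ht]; norm_num, hd3⟩
  intro x
  set δ : ℝ := ({S : {S : Finset V // S ∈ C} | ∃ k : {v : V // v ∈ S.1} → D,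
          (⟨S, k⟩ : Tup C D) ∈ R}.ncard : ℝ) with hδ
  by_cases hx : ∀ S : {S : Finset V // S ∈ C}, (⟨S, fun i => x i.1⟩ : Tup C D) ∈ A
  · have hx' : x ∈ SOL C (A \ R) := by rw [← hsol]; exact hx
    have hz : val C d x = 0 := by
      apply Finset.sum_eq_zero
      intro S _
      exact hd3 _ (hx' S)
    linarith
  · push_neg at hx
    obtain ⟨S₀, hS₀⟩ := hx
    set N : Finset {S : Finset V // S ∈ C} :=
      Finset.univ.filter (fun S => (⟨S, fun i => x i.1⟩ : Tup C D) ∈ R) with hN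
    have hNcard : (N.card : ℝ) ≤ δ := by
      have hsub : (↑N : Set _) ⊆ {S : {S : Finset V // S ∈ C} | ∃ k, (⟨S, k⟩ : Tup C D) ∈ R} := by
        intro S hS
        simp only [hN, Finset.coe_filter, Set.mem_setOf_eq, Finset.mem_univ, true_and] at hS
        exact ⟨_, hS⟩
      have h := Set.ncard_le_ncard hsub (Set.toFinite _)
      rw [Set.ncard_coe_finset] at h
      rw [hδ]; exact_mod_cast h
    have hsplit : val C d x = ∑ S ∈ N, d ⟨S, fun i => x i.1⟩ + ∑ S ∈ Nᶜ, d ⟨S, fun i => x i.1⟩ :=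
      (Finset.sum_add_sum_compl N _).symm
    have h1 : ∑ S ∈ N, d ⟨S, fun i => x i.1⟩ = -(N.card : ℝ) := by
      rw [Finset.sum_congr rfl (fun S hS => hd1 _ (by simpa [hN] using hS))]
      simp
    have h2 : δ ≤ ∑ S ∈ Nᶜ, d ⟨S, fun i => x i.1⟩ := by
      have hmem : S₀ ∈ Nᶜ := by
        simp only [hN, Finset.mem_compl, Finset.mem_filter, Finset.mem_univ, true_and]
        exact fun h => hS₀ (hRA h)
      have hval : d ⟨S₀, fun i => x i.1⟩ = δ := hd2 _ hS₀
      refine le_trans (le_of_eq hval.symm) (Finset.single_le_sum (f := fun S => d ⟨S, fun i => x i.1⟩) ?_ hmem)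
      intro S hS
      simp only [hN, Finset.mem_compl, Finset.mem_filter, Finset.mem_univ, true_and] at hS
      show 0 ≤ d ⟨S, fun i => x i.1⟩
      by_cases hA : (⟨S, fun i => x i.1⟩ : Tup C D) ∈ A
      · rw [hd3 _ ⟨hA, hS⟩]
      · rw [hd2 _ hA, hδ]; positivity
    rw [hsplit, h1]
    linarith
end

section
/- If A ⊆ T, R ⊆ A, and there exists an R-deactivating direction for A, then SOL(A) = SOL(A−R). -/
open Finset

variable {V : Type*} {D : Type*}

variable [Fintype V] [DecidableEq V] [Fintype D] [DecidableEq D] [Nonempty D]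

theorem stmt6 (C : Finset (Finset V)) (A R : Set (Tup C D)) (hRA : R ⊆ A)
    (h : ∃ d : Tup C D → ℝ, Deact C A R d) :
    SOL C A = SOL C (A \ R) := by
  obtain ⟨d, hd0, hdR, hdAR⟩ := h
  ext x
  constructor
  · intro hx S
    refine ⟨hx S, fun hR => absurd (hd0 x) (not_le.mpr ?_)⟩
    have : val C d x < ∑ _S : {S : Finset V // S ∈ C}, (0 : ℝ) := by
      apply Finset.sum_lt_sum
      · intro T _
        rcases Classical.em ((⟨T, fun i => x i.1⟩ : Tup C D) ∈ R) with hT | hT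
        · exact (hdR _ hT).le
        · exact le_of_eq (hdAR _ ⟨hx T, hT⟩)
      · exact ⟨S, Finset.mem_univ S, hdR _ hR⟩
    simpa using this
  · intro hx S
    exact (hx S).1
end

section
/- Let A ⊆ T, R, R' ⊆ A with R ∩ R' = ∅, let d be an R-deactivating direction for A, and d' an R'-deactivating direction for A−R. Define δ = 0 if d'_t ≤ −1 for all t ∈ R, otherwise δ = max{(−1−d'_t)/d_t : t ∈ R, d'_t > −1}. Then d'' = d' + δ·d is an (R ∪ R')-deactivating direction for A. -/
open Finset

variable {V : Type*} {D : Type*}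

variable [Fintype V] [DecidableEq V] [Fintype D] [DecidableEq D] [Nonempty D]

theorem stmt7 (C : Finset (Finset V)) (A R R' : Set (Tup C D)) (hRA : R ⊆ A)
    (hR'A : R' ⊆ A) (hdisj : R ∩ R' = ∅) (d d' : Tup C D → ℝ) (δ : ℝ)
    (hd : Deact C A R d) (hd' : Deact C (A \ R) R' d')
    (hδ0 : (∀ t ∈ R, d' t ≤ -1) → δ = 0)
    (hδ1 : ¬ (∀ t ∈ R, d' t ≤ -1) →
      IsGreatest {r : ℝ | ∃ t ∈ R, -1 < d' t ∧ r = (-1 - d' t) / d t} δ) :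
    Deact C A (R ∪ R') (fun t => d' t + δ * d t) := by
  obtain ⟨hd1, hd2, hd3⟩ := hd
  obtain ⟨hd'1, hd'2, hd'3⟩ := hd'
  have hδnn : 0 ≤ δ := by
    by_cases h : ∀ t ∈ R, d' t ≤ -1
    · rw [hδ0 h]
    · obtain ⟨⟨t, ht, htgt, hteq⟩, _⟩ := hδ1 h
      have hdt : d t < 0 := hd2 t ht
      have : 0 < (-1 - d' t) / d t := div_pos_of_neg_of_neg (by linarith) hdt
      linarith [this, hteq ▸ this]
  refine ⟨?_, ?_, ?_⟩
  · intro x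
    have : val C (fun t => d' t + δ * d t) x = val C d' x + δ * val C d x := by
      simp [_root_.val, Finset.sum_add_distrib, Finset.mul_sum]
    rw [this]
    exact add_nonneg (hd'1 x) (mul_nonneg hδnn (hd1 x))
  · intro t ht
    rcases ht with ht | ht
    · have hdt : d t < 0 := hd2 t ht
      by_cases h : ∀ s ∈ R, d' s ≤ -1
      · have := h t ht
        have hδz := hδ0 h
        simp only [hδz, zero_mul, add_zero]
        linarith
      · obtain ⟨hmem, hub⟩ := hδ1 h
        have hδpos : 0 < δ := by
          obtain ⟨s, hs, hsgt, hseq⟩ := hmem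
          have hds : d s < 0 := hd2 s hs
          have : 0 < (-1 - d' s) / d s := div_pos_of_neg_of_neg (by linarith) hds
          linarith [hseq ▸ this]
        by_cases hle : d' t ≤ -1
        · have : δ * d t < 0 := mul_neg_of_pos_of_neg hδpos hdt
          simp only []
          linarith
        · push_neg at hle
          have hr : (-1 - d' t) / d t ≤ δ := hub ⟨t, ht, hle, rfl⟩
          have : δ * d t ≤ ((-1 - d' t) / d t) * d t :=
            mul_le_mul_of_nonpos_right hr (le_of_lt hdt)
          rw [div_mul_cancel₀ _ (ne_of_lt hdt)] at this
          simp only []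
          linarith
    · have hA : t ∈ A \ R := by
        refine ⟨hR'A ht, fun hR => ?_⟩
        have : t ∈ R ∩ R' := ⟨hR, ht⟩
        simp [hdisj] at this
      have h1 : d' t < 0 := hd'2 t ht
      have h2 : d t = 0 := hd3 t hA
      simp only [h2, mul_zero, add_zero]
      exact h1
  · intro t ht
    obtain ⟨htA, htR⟩ := ht
    have htnR : t ∉ R := fun h => htR (Or.inl h)
    have htnR' : t ∉ R' := fun h => htR (Or.inr h)
    have h2 : d t = 0 := hd3 t ⟨htA, htnR⟩
    have h1 : d' t = 0 := hd'3 t ⟨⟨htA, htnR⟩, htnR'⟩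
    simp [h1, h2]
end

section
/- If f is an optimal super-reparametrization of g (minimizing B over all super-reparametrizations of g), then the set of optimal assignments of g is contained in the set of optimal assignments of f, and the set of optimal assignments of f equals SOL(A*(f)). -/
open Finset

variable {V : Type*} {D : Type*}

variable [Fintype V] [DecidableEq V] [Fintype D] [DecidableEq D] [Nonempty D]

theorem stmt12 (C : Finset (Finset V)) (g f : Tup C D → ℝ) (hf : SuperRepar C g f)
    (hopt : ∀ f' : Tup C D → ℝ, SuperRepar C g f' → B C f ≤ B C f') :
    OPT C g ⊆ OPT C f ∧ OPT C f = SOL C (Astar C f) := by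
  classical
  have hne : (Finset.univ : Finset (V → D)).Nonempty := Finset.univ_nonempty
  set M : ℝ := Finset.univ.sup' hne (val C g) with hM
  have hvB : ∀ (h : Tup C D → ℝ) (x : V → D), val C h x ≤ B C h := by
    intro h x
    apply Finset.sum_le_sum
    intro S _
    exact Finset.le_sup' (fun k => h ⟨S, k⟩) (Finset.mem_univ _)
  have hBleM : B C f ≤ M := by
    by_cases hC : Nonempty {S : Finset V // S ∈ C}
    · set n : ℝ := (Fintype.card {S : Finset V // S ∈ C} : ℝ) with hn
      have hnpos : 0 < n := by
        rw [hn]; exact_mod_cast Fintype.card_pos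
      have hval' : ∀ x : V → D, val C (fun _ => M / n) x = M := by
        intro x
        unfold _root_.val
        rw [Finset.sum_const, Finset.card_univ, nsmul_eq_mul, ← hn,
          mul_div_cancel₀ _ (ne_of_gt hnpos)]
      have hsr : SuperRepar C g (fun _ => M / n) := by
        intro x
        rw [hval' x]
        exact Finset.le_sup' (val C g) (Finset.mem_univ x)
      have hB' : B C (fun _ : Tup C D => M / n) = M := by
        unfold B
        simp only [Finset.sup'_const]
        rw [Finset.sum_const, Finset.card_univ, nsmul_eq_mul, ← hn,
          mul_div_cancel₀ _ (ne_of_gt hnpos)]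
      have := hopt _ hsr
      rwa [hB'] at this
    · have he : IsEmpty {S : Finset V // S ∈ C} := not_nonempty_iff.mp hC
      have hB0 : B C f = 0 := by unfold B; simp
      have h0 : val C g (Classical.arbitrary (V → D)) = 0 := by unfold _root_.val; simp
      have hle := Finset.le_sup' (val C g) (Finset.mem_univ (Classical.arbitrary (V → D)))
      rw [h0] at hle
      rw [hB0]; exact hle
  have hMleB : M ≤ B C f :=
    Finset.sup'_le hne _ (fun x _ => le_trans (hf x) (hvB f x))
  have hBM : B C f = M := le_antisymm hBleM hMleB
  obtain ⟨x0, -, hx0⟩ := Finset.exists_mem_eq_sup' hne (val C g)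
  have hfx0 : val C f x0 = B C f :=
    le_antisymm (hvB f x0) (by rw [hBM, hM, hx0]; exact hf x0)
  constructor
  · intro x hx y
    have hxM : val C g x = M :=
      le_antisymm (Finset.le_sup' _ (Finset.mem_univ x)) (by rw [hM, hx0]; exact hx x0)
    calc val C f y ≤ B C f := hvB f y
      _ = M := hBM
      _ = val C g x := hxM.symm
      _ ≤ val C f x := hf x
  · ext x
    constructor
    · intro hx
      have hvfx : val C f x = B C f := le_antisymm (hvB f x) (hfx0 ▸ hx x0)
      have heq : ∀ S ∈ (Finset.univ : Finset {S : Finset V // S ∈ C}),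
          f ⟨S, fun i => x i.1⟩ =
            Finset.univ.sup' Finset.univ_nonempty (fun k : {v : V // v ∈ S.1} → D => f ⟨S, k⟩) := by
        apply (Finset.sum_eq_sum_iff_of_le
          (fun S _ => Finset.le_sup' (fun k => f ⟨S, k⟩) (Finset.mem_univ _))).mp
        exact hvfx
      intro S k
      calc f ⟨S, k⟩
          ≤ Finset.univ.sup' Finset.univ_nonempty (fun k : {v : V // v ∈ S.1} → D => f ⟨S, k⟩) :=
            Finset.le_sup' (fun k : {v : V // v ∈ S.1} → D => f ⟨S, k⟩) (Finset.mem_univ k)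
        _ = f ⟨S, fun i => x i.1⟩ := (heq S (Finset.mem_univ S)).symm
    · intro hx y
      have hterm : ∀ S : {S : Finset V // S ∈ C},
          f ⟨S, fun i => x i.1⟩ =
            Finset.univ.sup' Finset.univ_nonempty (fun k : {v : V // v ∈ S.1} → D => f ⟨S, k⟩) :=
        fun S => le_antisymm
          (Finset.le_sup' (fun k : {v : V // v ∈ S.1} → D => f ⟨S, k⟩)
            (Finset.mem_univ (fun i => x i.1)))
          (Finset.sup'_le _ _ (fun k _ => hx S k))
      have hvfx : val C f x = B C f := by
        unfold _root_.val B
        exact Finset.sum_congr rfl (fun S _ => hterm S)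
      rw [hvfx]
      exact hvB f y
end

section
/- For every g ∈ ℝ^T and every CSP A ⊆ T such that OPT(g) ⊆ SOL(A), there exists an optimal super-reparametrization f of g with A*(f) = A. -/
open Finset

variable {V : Type*} {D : Type*}

variable [Fintype V] [DecidableEq V] [Fintype D] [DecidableEq D] [Nonempty D]

theorem stmt13 (C : Finset (Finset V)) (g : Tup C D → ℝ) (A : Set (Tup C D))
    (hA : OPT C g ⊆ SOL C A) :
    ∃ f : Tup C D → ℝ, SuperRepar C g f ∧
      (∀ f' : Tup C D → ℝ, SuperRepar C g f' → B C f ≤ B C f') ∧ Astar C f = A := by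
  classical
  by_cases hC : C = ∅
  · subst hC
    haveI hE : IsEmpty {S : Finset V // S ∈ (∅ : Finset (Finset V))} :=
      ⟨fun S => Finset.notMem_empty S.1 S.2⟩
    refine ⟨fun _ => 0, ?_, ?_, ?_⟩
    · intro x
      unfold _root_.val
      simp
    · intro f' _
      unfold B
      simp
    · ext t
      exact isEmptyElim t.1
  · have hCne : C.Nonempty := Finset.nonempty_iff_ne_empty.mpr hC
    haveI : Nonempty {S : Finset V // S ∈ C} := ⟨⟨hCne.choose, hCne.choose_spec⟩⟩
    set n : ℕ := C.card with hn
    have hn0 : 0 < (n : ℝ) := by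
      have := Finset.card_pos.mpr hCne
      exact_mod_cast this
    set F₁ : ℝ := (Finset.univ : Finset (V → D)).sup' Finset.univ_nonempty (val C g) with hF1def
    have hF1 : ∀ x : V → D, val C g x ≤ F₁ := fun x => Finset.le_sup' _ (mem_univ x)
    obtain ⟨x₀, -, hx₀⟩ := Finset.exists_mem_eq_sup' (Finset.univ_nonempty (α := V → D)) (val C g)
    have hx₀opt : x₀ ∈ OPT C g := fun y => hx₀ ▸ hF1 y
    have hx₀A : ∀ S : {S : Finset V // S ∈ C}, (⟨S, fun i => x₀ i.1⟩ : Tup C D) ∈ A := hA hx₀opt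
    set S₂ : Finset (V → D) := Finset.univ.filter (fun x => val C g x < F₁) with hS2def
    set F₂ : ℝ := if h : S₂.Nonempty then S₂.sup' h (val C g) else F₁ with hF2def
    have hF21 : F₂ ≤ F₁ := by
      rw [hF2def]
      split_ifs with h
      · exact Finset.sup'_le _ _ fun b hb => le_of_lt (by simpa [hS2def] using hb)
      · exact le_refl _
    have hF2ub : ∀ x : V → D, val C g x < F₁ → val C g x ≤ F₂ := by
      intro x hx
      have hxm : x ∈ S₂ := by simp [hS2def, hx]
      have hne : S₂.Nonempty := ⟨x, hxm⟩
      rw [hF2def, dif_pos hne]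
      exact Finset.le_sup' _ hxm
    have hF2lt : (∃ x : V → D, val C g x < F₁) → F₂ < F₁ := by
      rintro ⟨x, hx⟩
      have hxm : x ∈ S₂ := by simp [hS2def, hx]
      have hne : S₂.Nonempty := ⟨x, hxm⟩
      rw [hF2def, dif_pos hne]
      exact (Finset.sup'_lt_iff hne).mpr fun b hb => by simpa [hS2def] using hb
    have hnSOL : ∀ x : V → D, x ∉ SOL C A → val C g x < F₁ := by
      intro x hx
      by_contra h
      push_neg at h
      exact hx (hA fun y => le_trans (hF1 y) h)
    set f : Tup C D → ℝ := fun t => if t ∈ A then F₁ / n else F₂ / n with hfdef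
    have hfite : ∀ t : Tup C D, f t = if t ∈ A then F₁ / n else F₂ / n := fun t => rfl
    have hF2n : F₂ / (n : ℝ) ≤ F₁ / n := by gcongr
    have hfle : ∀ t : Tup C D, f t ≤ F₁ / n := by
      intro t
      rw [hfite]
      split_ifs
      · exact le_refl _
      · exact hF2n
    have hfge : ∀ t : Tup C D, F₂ / n ≤ f t := by
      intro t
      rw [hfite]
      split_ifs
      · exact hF2n
      · exact le_refl _
    have hcard : Fintype.card {S : Finset V // S ∈ C} = n := Fintype.card_coe C
    have hsumconst : ∀ c : ℝ, (∑ _S : {S : Finset V // S ∈ C}, c) = n * c := by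
      intro c
      rw [Finset.sum_const, Finset.card_univ, hcard, nsmul_eq_mul]
    have hvB : ∀ (h : Tup C D → ℝ) (x : V → D), val C h x ≤ B C h := by
      intro h x
      unfold _root_.val B
      exact Finset.sum_le_sum fun S _ =>
        Finset.le_sup' (fun k : {v : V // v ∈ S.1} → D => h ⟨S, k⟩) (mem_univ _)
    have hvalSOL : ∀ x : V → D, x ∈ SOL C A → val C f x = F₁ := by
      intro x hx
      have h1 : val C f x = ∑ _S : {S : Finset V // S ∈ C}, F₁ / n := by
        unfold _root_.val
        refine Finset.sum_congr rfl fun S _ => ?_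
        rw [hfite, if_pos (hx S)]
      rw [h1, hsumconst, mul_div_cancel₀ _ (ne_of_gt hn0)]
    have hsuper : SuperRepar C g f := by
      intro x
      by_cases hx : x ∈ SOL C A
      · rw [hvalSOL x hx]; exact hF1 x
      · have h1 : val C g x ≤ F₂ := hF2ub x (hnSOL x hx)
        have h2 : F₂ ≤ val C f x := by
          have h3 : (∑ _S : {S : Finset V // S ∈ C}, F₂ / n) ≤ val C f x := by
            unfold _root_.val
            exact Finset.sum_le_sum fun S _ => hfge _
          rwa [hsumconst, mul_div_cancel₀ _ (ne_of_gt hn0)] at h3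
        exact h1.trans h2
    have hBf : B C f = F₁ := by
      have h1 : B C f = ∑ _S : {S : Finset V // S ∈ C}, F₁ / n := by
        unfold B
        refine Finset.sum_congr rfl fun S _ => le_antisymm ?_ ?_
        · exact Finset.sup'_le _ _ fun k _ => hfle ⟨S, k⟩
        · have h2 : f ⟨S, fun i => x₀ i.1⟩ = F₁ / n := by rw [hfite, if_pos (hx₀A S)]
          calc F₁ / (n:ℝ) = f ⟨S, fun i => x₀ i.1⟩ := h2.symm
            _ ≤ _ := Finset.le_sup' (fun k : {v : V // v ∈ S.1} → D => f ⟨S, k⟩)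
                (mem_univ (fun i => x₀ i.1))
      rw [h1, hsumconst, mul_div_cancel₀ _ (ne_of_gt hn0)]
    refine ⟨f, hsuper, ?_, ?_⟩
    · intro f' hf'
      rw [hBf]
      calc F₁ = val C g x₀ := hx₀
        _ ≤ val C f' x₀ := hf' x₀
        _ ≤ B C f' := hvB f' x₀
    · ext t
      constructor
      · intro ht
        by_contra htA
        set x : V → D := fun v => if h : v ∈ t.1.1 then t.2 ⟨v, h⟩ else Classical.arbitrary D
          with hxdef
        have hk : (fun i : {v // v ∈ t.1.1} => x i.1) = t.2 := by
          funext i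
          simp [hxdef, i.2]
        have hxS : x ∉ SOL C A := by
          intro hs
          have h4 := hs t.1
          rw [hk] at h4
          exact htA h4
        have hlt : F₂ < F₁ := hF2lt ⟨x, hnSOL x hxS⟩
        have hk₀ := ht (fun i => x₀ i.1)
        rw [hfite, hfite, if_pos (hx₀A t.1), if_neg htA] at hk₀
        exact absurd hk₀ (not_le.mpr (by gcongr))
      · intro htA k
        calc f ⟨t.1, k⟩ ≤ F₁ / n := hfle _
          _ = f t := by rw [hfite, if_pos htA]
end

section
/- For every g ∈ ℝ^T, the collection {A*(f) : f is an optimal super-reparametrization of g} equals {A ⊆ T : OPT(g) ⊆ SOL(A)}. -/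
open Finset

variable {V : Type*} {D : Type*}

variable [Fintype V] [DecidableEq V] [Fintype D] [DecidableEq D] [Nonempty D]

/-!
For an optimal super-reparametrization `f` of `g` and an optimal assignment `x`, the weak duality
chain `⟨g, φ(x)⟩ ≤ ⟨f, φ(x)⟩ ≤ B(f)` is tight, which forces every tuple of `x` to be active.
Conversely, given `A` with `OPT(g) ⊆ SOL(A)` and an optimal `x₀`, the weights that are constantly
`g_S(x₀[S])` on `A ∩ D^S` and `δ` lower off `A` have `A` as active tuples and `B = ⟨g, φ(x₀)⟩`;
they dominate `g` for small `δ > 0` because every assignment outside `SOL(A)` is strictly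
suboptimal, and there are only finitely many of them.
-/

set_option linter.unusedSectionVars false

open Filter Topology

section
variable {C : Finset (Finset V)}

lemma val_le_B (f : Tup C D → ℝ) (x : V → D) : val C f x ≤ B C f :=
  sum_le_sum fun S _ => le_sup' (fun k => f ⟨S, k⟩) (mem_univ _)

lemma val_eq_B_iff_mem_SOL_Astar (f : Tup C D → ℝ) (x : V → D) :
    val C f x = B C f ↔ x ∈ SOL C (Astar C f) := by
  rw [_root_.val, B, sum_eq_sum_iff_of_le fun S _ => le_sup' (fun k => f ⟨S, k⟩) (mem_univ _)]
  simp only [mem_univ, true_implies]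
  refine forall_congr' fun S => ⟨fun h k => (le_sup' _ (mem_univ k)).trans h.ge, fun h => ?_⟩
  exact le_antisymm (le_sup' (fun k => f ⟨S, k⟩) (mem_univ _)) (sup'_le _ _ fun k _ => h k)

lemma OPT_nonempty (g : Tup C D → ℝ) : (OPT C g).Nonempty :=
  Finite.exists_max (val C g)

open Classical in
noncomputable def plateau (g : Tup C D → ℝ) (x₀ : V → D) (A : Set (Tup C D)) (δ : ℝ)
    (t : Tup C D) : ℝ :=
  g ⟨t.1, fun i => x₀ i.1⟩ - if t ∈ A then 0 else δ

variable {g : Tup C D → ℝ} {x₀ : V → D} {A : Set (Tup C D)} {δ : ℝ}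

lemma Astar_plateau (hx₀ : x₀ ∈ SOL C A) (hδ : 0 < δ) : Astar C (plateau g x₀ A δ) = A := by
  ext t
  have hle : ∀ k, plateau g x₀ A δ ⟨t.1, k⟩ ≤ g ⟨t.1, fun i => x₀ i.1⟩ := by
    intro k
    unfold plateau
    split_ifs <;> linarith
  constructor
  · intro ht
    by_contra hA
    have := ht fun i => x₀ i.1
    simp only [plateau, hx₀ t.1, hA, if_true, if_false] at this
    linarith
  · intro ht k
    simpa only [plateau, ht, if_true, sub_zero] using hle k

lemma val_plateau_of_mem_SOL {x : V → D} (hx : x ∈ SOL C A) :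
    val C (plateau g x₀ A δ) x = val C g x₀ :=
  sum_congr rfl fun S _ => by simp [plateau, hx S]

lemma tendsto_val_plateau (x : V → D) :
    Tendsto (fun δ => val C (plateau g x₀ A δ) x) (𝓝 0) (𝓝 (val C g x₀)) := by
  classical
  have hcont : Continuous fun δ => val C (plateau g x₀ A δ) x :=
    continuous_finsetSum _ fun S _ =>
      continuous_const.sub (continuous_const.if_const _ continuous_id)
  exact hcont.tendsto' 0 _ (by simp [_root_.val, plateau])

lemma exists_superRepar_plateau (hx₀ : x₀ ∈ OPT C g) (hA : OPT C g ⊆ SOL C A) :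
    ∃ δ > 0, SuperRepar C g (plateau g x₀ A δ) := by
  have hdom : ∀ x, ∀ᶠ δ in 𝓝 0, val C g x ≤ val C (plateau g x₀ A δ) x := by
    intro x
    by_cases hx : x ∈ SOL C A
    · exact Eventually.of_forall fun δ => (val_plateau_of_mem_SOL hx).ge.trans' (hx₀ x)
    · have hlt : val C g x < val C g x₀ :=
        (hx₀ x).lt_of_ne fun h => hx (hA fun y => h ▸ hx₀ y)
      exact ((tendsto_val_plateau x).eventually (lt_mem_nhds hlt)).mono fun _ => le_of_lt
  obtain ⟨δ, hδ, hpos⟩ :=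
    ((eventually_all.2 hdom).filter_mono nhdsWithin_le_nhds |>.and
      (self_mem_nhdsWithin (s := Set.Ioi (0 : ℝ)))).exists
  exact ⟨δ, hpos, hδ⟩

lemma exists_superRepar_B_eq_Astar_eq (hx₀ : x₀ ∈ OPT C g) (hA : OPT C g ⊆ SOL C A) :
    ∃ f, SuperRepar C g f ∧ B C f = val C g x₀ ∧ Astar C f = A := by
  obtain ⟨δ, hδ, hf⟩ := exists_superRepar_plateau hx₀ hA
  have hAstar := Astar_plateau (g := g) (hA hx₀) hδ
  have hB := (val_eq_B_iff_mem_SOL_Astar _ x₀).2 (by rw [hAstar]; exact hA hx₀)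
  exact ⟨_, hf, hB ▸ val_plateau_of_mem_SOL (hA hx₀), hAstar⟩

end

theorem stmt14 (C : Finset (Finset V)) (g : Tup C D → ℝ) :
    {A : Set (Tup C D) | ∃ f : Tup C D → ℝ, SuperRepar C g f ∧
        (∀ f' : Tup C D → ℝ, SuperRepar C g f' → B C f ≤ B C f') ∧ Astar C f = A} =
      {A : Set (Tup C D) | OPT C g ⊆ SOL C A} := by
  ext A
  constructor
  · rintro ⟨f, hf, hmin, rfl⟩ x hx
    obtain ⟨f₀, hf₀, hB₀, -⟩ :=
      exists_superRepar_B_eq_Astar_eq (A := Set.univ) hx fun _ _ _ => trivial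
    rw [← val_eq_B_iff_mem_SOL_Astar]
    exact le_antisymm (val_le_B f x) ((hmin f₀ hf₀).trans (hB₀.trans_le (hf x)))
  · intro hA
    obtain ⟨x₀, hx₀⟩ := OPT_nonempty g
    obtain ⟨f, hf, hB, hAstar⟩ := exists_superRepar_B_eq_Astar_eq hx₀ hA
    exact ⟨f, hf, fun f' hf' => hB.trans_le ((hf' x₀).trans (val_le_B f' x₀)), hAstar⟩
end

section
/- Let f ∈ ℝ^T, let d be an R-deactivating direction for A*(f), and suppose (A*(f)−R) ∩ T_S ≠ ∅ for a scope S ∈ C. Define β = min{(max_{t∈T_{S'}} f_t − f_{t'})/d_{t'} : S'∈C, t'∈T_{S'}, d_{t'} > 0}. Then for every α with 0 ≤ α ≤ β, the vector f' = f + α·d satisfies max_{t∈T_S} f'_t = max_{t∈T_S} f_t. -/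
open Finset

variable {V : Type*} {D : Type*}

variable [Fintype V] [DecidableEq V] [Fintype D] [DecidableEq D] [Nonempty D]

theorem stmt18 (C : Finset (Finset V)) (f d : Tup C D → ℝ) (R : Set (Tup C D))
    (hRA : R ⊆ Astar C f) (hd : Deact C (Astar C f) R d)
    (S : {S : Finset V // S ∈ C})
    (hS : ∃ k : {v : V // v ∈ S.1} → D, (⟨S, k⟩ : Tup C D) ∈ Astar C f \ R)
    (α : ℝ) (hα0 : 0 ≤ α)
    (hαβ : ∀ (S' : {S : Finset V // S ∈ C}) (k' : {v : V // v ∈ S'.1} → D),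
      0 < d ⟨S', k'⟩ →
      α ≤ (Finset.univ.sup' Finset.univ_nonempty (fun k : {v : V // v ∈ S'.1} → D => f ⟨S', k⟩) - f ⟨S', k'⟩) / d ⟨S', k'⟩) :
    Finset.univ.sup' Finset.univ_nonempty
        (fun k : {v : V // v ∈ S.1} → D => f ⟨S, k⟩ + α * d ⟨S, k⟩) =
      Finset.univ.sup' Finset.univ_nonempty (fun k : {v : V // v ∈ S.1} → D => f ⟨S, k⟩) := by
  obtain ⟨k₀, hk₀A, hk₀R⟩ := hS
  have hd0 : d ⟨S, k₀⟩ = 0 := hd.2.2 _ ⟨hk₀A, hk₀R⟩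
  set M := Finset.univ.sup' Finset.univ_nonempty (fun k : {v : V // v ∈ S.1} → D => f ⟨S, k⟩) with hM
  have hfk₀ : f ⟨S, k₀⟩ = M := by
    apply le_antisymm
    · exact Finset.le_sup' (fun k : {v : V // v ∈ S.1} → D => f ⟨S, k⟩) (Finset.mem_univ k₀)
    · exact Finset.sup'_le _ _ fun k _ => hk₀A k
  apply le_antisymm
  · apply Finset.sup'_le
    intro k _
    by_cases hpos : 0 < d ⟨S, k⟩
    · have := hαβ S k hpos
      have := (le_div_iff₀ hpos).mp this
      linarith
    · push_neg at hpos
      have hle : f ⟨S, k⟩ ≤ M := Finset.le_sup' (fun k : {v : V // v ∈ S.1} → D => f ⟨S, k⟩) (Finset.mem_univ k)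
      nlinarith
  · calc M = f ⟨S, k₀⟩ + α * d ⟨S, k₀⟩ := by rw [hd0]; ring_nf; exact hfk₀.symm
      _ ≤ _ := Finset.le_sup' (fun k : {v : V // v ∈ S.1} → D => f ⟨S, k⟩ + α * d ⟨S, k⟩) (Finset.mem_univ k₀)
end

section
/- Let f ∈ ℝ^T, let d be an R-deactivating direction for A*(f), and let S ∈ C with (A*(f)−R) ∩ T_S = ∅. With β as before and γ = min{(f_t − f_{t'})/(d_{t'} − d_t) : S'∈C with (A*(f)−R)∩T_{S'} = ∅, t ∈ T_{S'}∩R, t' ∈ T_{S'}−R, d_{t'} > d_t} (γ = +∞ if the set is empty), both β > 0 and γ > 0 hold, and for every α with 0 < α ≤ min{β,γ}, f' = f + α·d satisfies max_{t∈T_S} f'_t < max_{t∈T_S} f_t. -/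
open Finset

variable {V : Type*} {D : Type*}

variable [Fintype V] [DecidableEq V] [Fintype D] [DecidableEq D] [Nonempty D]

theorem stmt19 (C : Finset (Finset V)) (f d : Tup C D → ℝ) (R : Set (Tup C D))
    (hR : R.Nonempty) (hRA : R ⊆ Astar C f) (hd : Deact C (Astar C f) R d)
    (S : {S : Finset V // S ∈ C})
    (hS : ∀ k : {v : V // v ∈ S.1} → D, (⟨S, k⟩ : Tup C D) ∉ Astar C f \ R)
    (α : ℝ) (hα0 : 0 < α)
    (hαβ : ∀ (S' : {S : Finset V // S ∈ C}) (k' : {v : V // v ∈ S'.1} → D),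
      0 < d ⟨S', k'⟩ →
      α ≤ (Finset.univ.sup' Finset.univ_nonempty (fun k : {v : V // v ∈ S'.1} → D => f ⟨S', k⟩) - f ⟨S', k'⟩) / d ⟨S', k'⟩)
    (hαγ : ∀ S' : {S : Finset V // S ∈ C},
      (∀ k : {v : V // v ∈ S'.1} → D, (⟨S', k⟩ : Tup C D) ∉ Astar C f \ R) →
      ∀ k k' : {v : V // v ∈ S'.1} → D, (⟨S', k⟩ : Tup C D) ∈ R →
        (⟨S', k'⟩ : Tup C D) ∉ R → d ⟨S', k⟩ < d ⟨S', k'⟩ →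
        α ≤ (f ⟨S', k⟩ - f ⟨S', k'⟩) / (d ⟨S', k'⟩ - d ⟨S', k⟩)) :
    (∀ (S' : {S : Finset V // S ∈ C}) (k' : {v : V // v ∈ S'.1} → D),
      0 < d ⟨S', k'⟩ →
      0 < (Finset.univ.sup' Finset.univ_nonempty (fun k : {v : V // v ∈ S'.1} → D => f ⟨S', k⟩) - f ⟨S', k'⟩) / d ⟨S', k'⟩) ∧
    (∀ S' : {S : Finset V // S ∈ C},
      (∀ k : {v : V // v ∈ S'.1} → D, (⟨S', k⟩ : Tup C D) ∉ Astar C f \ R) →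
      ∀ k k' : {v : V // v ∈ S'.1} → D, (⟨S', k⟩ : Tup C D) ∈ R →
        (⟨S', k'⟩ : Tup C D) ∉ R → d ⟨S', k⟩ < d ⟨S', k'⟩ →
        0 < (f ⟨S', k⟩ - f ⟨S', k'⟩) / (d ⟨S', k'⟩ - d ⟨S', k⟩)) ∧
    Finset.univ.sup' Finset.univ_nonempty
        (fun k : {v : V // v ∈ S.1} → D => f ⟨S, k⟩ + α * d ⟨S, k⟩) <
      Finset.univ.sup' Finset.univ_nonempty (fun k : {v : V // v ∈ S.1} → D => f ⟨S, k⟩) := by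
  obtain ⟨hd0, hdR, hdA⟩ := hd
  refine ⟨?_, ?_, ?_⟩
  · intro S' k' hk'
    have hk'A : (⟨S', k'⟩ : Tup C D) ∉ Astar C f := by
      intro h
      by_cases hr : (⟨S', k'⟩ : Tup C D) ∈ R
      · exact absurd hk' (not_lt.2 (le_of_lt (hdR _ hr)))
      · rw [hdA _ ⟨h, hr⟩] at hk'; exact lt_irrefl 0 hk'
    have hex : ∃ k, f ⟨S', k'⟩ < f ⟨S', k⟩ := by
      by_contra h
      push_neg at h
      exact hk'A (fun k => h k)
    obtain ⟨k, hk⟩ := hex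
    have hle : f ⟨S', k⟩ ≤ Finset.univ.sup' Finset.univ_nonempty
        (fun k : {v : V // v ∈ S'.1} → D => f ⟨S', k⟩) :=
      Finset.le_sup' (fun k => f ⟨_, k⟩) (Finset.mem_univ k)
    exact div_pos (by linarith) hk'
  · intro S' hS' k k' hkR hk'R hdd
    have hkA : (⟨S', k⟩ : Tup C D) ∈ Astar C f := hRA hkR
    have hk'A : (⟨S', k'⟩ : Tup C D) ∉ Astar C f := fun h => hS' k' ⟨h, hk'R⟩
    have hex : ∃ k'', f ⟨S', k'⟩ < f ⟨S', k''⟩ := by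
      by_contra h; push_neg at h; exact hk'A (fun k => h k)
    obtain ⟨k'', hk''⟩ := hex
    have := hkA k''
    exact div_pos (by linarith) (by linarith)
  · obtain ⟨k₀, -, hk₀⟩ := Finset.exists_mem_eq_sup' Finset.univ_nonempty
      (fun k : {v : V // v ∈ S.1} → D => f ⟨S, k⟩)
    set M := Finset.univ.sup' Finset.univ_nonempty
      (fun k : {v : V // v ∈ S.1} → D => f ⟨S, k⟩) with hM
    have hk₀A : (⟨S, k₀⟩ : Tup C D) ∈ Astar C f := by
      intro k
      have : f ⟨S, k⟩ ≤ M := Finset.le_sup' (fun k => f ⟨_, k⟩) (Finset.mem_univ k)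
      simpa [← hk₀] using this
    have hk₀R : (⟨S, k₀⟩ : Tup C D) ∈ R := by
      by_contra hr; exact hS k₀ ⟨hk₀A, hr⟩
    have hd₀ : d ⟨S, k₀⟩ < 0 := hdR _ hk₀R
    rw [Finset.sup'_lt_iff]
    intro k _
    have hkM : f ⟨S, k⟩ ≤ M := Finset.le_sup' (fun k => f ⟨_, k⟩) (Finset.mem_univ k)
    have hMk₀ : M = f ⟨S, k₀⟩ := hk₀
    by_cases hkR : (⟨S, k⟩ : Tup C D) ∈ R
    · have := hdR _ hkR
      nlinarith
    · by_cases hdd : d ⟨S, k₀⟩ < d ⟨S, k⟩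
      · have hγ := hαγ S hS k₀ k hk₀R hkR hdd
        rw [le_div_iff₀ (by linarith)] at hγ
        nlinarith
      · push_neg at hdd
        nlinarith
end
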